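/- arXiv:2203.03116 — 4 statements merged into one kernel-verified Lean document; each statement's English description precedes it below -/
import Mathlib

section
/- Let p1 and p2 be real polynomials that are not both zero, with degrees d1 and d2 respectively (using the convention that the degree of the zero polynomial is −1), and let c be a nonzero real number. Then the function f(x) = p1(x)·exp(c·x) + p2(x)·exp(−c·x) has at most d1 + d2 + 1 real zeros; that is, the set {x ∈ ℝ : f(x) = 0} is finite with cardinality at most d1 + d2 + 1. -/
/-!
Multiplying by `exp (c x)`, the zeros of `f` are those of `g = p₁ e^{2cx} + p₂` (swap `p₁` and `p₂`
and replace `c` by `-c` to make `p₁ ≠ 0`). Its derivative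
`(p₁' + 2c p₁) e^{2cx} + p₂'` has the same shape, with the first polynomial of unchanged degree and
the second one of one degree less, while Rolle's theorem loses at most one zero per
differentiation. After `deg p₂ + 1` differentiations the second polynomial vanishes, and what is
left has only the `deg p₁` roots of a polynomial of degree `deg p₁`.
-/

open Polynomial

theorem Set.encard_le_of_forall_finset_card_le {α : Type*} {s : Set α} {k : ℕ∞}
    (h : ∀ t : Finset α, ↑t ⊆ s → (t.card : ℕ∞) ≤ k) : s.encard ≤ k := by
  by_contra! hlt
  have hk : k ≠ ⊤ := hlt.ne_top
  obtain ⟨t, hts, htcard⟩ := Set.exists_subset_encard_eq (Order.add_one_le_of_lt hlt)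
  obtain ⟨t, rfl⟩ := (Set.finite_of_encard_eq_coe (k := k.toNat + 1) (by
    rw [htcard]; lift k to ℕ using hk; simp)).exists_finset_coe
  have := h t hts
  rw [← Set.encard_coe_eq_coe_finsetCard, htcard] at this
  exact (ENat.lt_add_one_iff hk).2 le_rfl |>.not_ge this

theorem encard_zeros_le_encard_deriv_zeros_add_one {h : ℝ → ℝ} (hd : Differentiable ℝ h) :
    {x | h x = 0}.encard ≤ {x | deriv h x = 0}.encard + 1 := by
  obtain hT | hT := Set.infinite_or_finite {x | deriv h x = 0}
  · simp [hT.encard_eq]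
  rw [hT.encard_eq_coe_toFinset_card]
  refine Set.encard_le_of_forall_finset_card_le fun s hs => ?_
  norm_cast
  refine Finset.card_le_of_interleaved fun x hx y hy hxy _ => ?_
  obtain ⟨z, hz, hz'⟩ :=
    exists_deriv_eq_zero hxy hd.continuous.continuousOn ((hs hx).trans (hs hy).symm)
  exact ⟨z, by simpa using hz', hz⟩

namespace Polynomial

theorem degree_derivative_add_C_mul {R : Type*} [Semiring R] [NoZeroDivisors R] {a : R}
    (ha : a ≠ 0) (p : R[X]) :
    (derivative p + C a * p).degree = p.degree := by
  rcases eq_or_ne p 0 with rfl | hp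
  · simp
  rw [degree_add_eq_right_of_degree_lt, degree_C_mul ha]
  exact (degree_C_mul ha).symm ▸ degree_derivative_lt hp

theorem hasDerivAt_eval_mul_exp_add_eval (a : ℝ) (p q : ℝ[X]) (x : ℝ) :
    HasDerivAt (fun x => p.eval x * Real.exp (a * x) + q.eval x)
      ((derivative p + C a * p).eval x * Real.exp (a * x) + (derivative q).eval x) x := by
  have he : HasDerivAt (fun x => Real.exp (a * x)) (Real.exp (a * x) * a) x :=
    ((hasDerivAt_id x).const_mul a).exp.congr_deriv (by simp)
  refine (((p.hasDerivAt x).mul he).add (q.hasDerivAt x)).congr_deriv ?_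
  simp only [eval_add, eval_mul, eval_C]
  ring

theorem encard_zeros_eval_mul_exp_add_eval_le {a : ℝ} (ha : a ≠ 0) (n : ℕ) :
    ∀ {p q : ℝ[X]}, p ≠ 0 → derivative^[n] q = 0 →
      {x | p.eval x * Real.exp (a * x) + q.eval x = 0}.encard ≤ p.natDegree + n := by
  induction n with
  | zero =>
    intro p q hp hq
    obtain rfl : q = 0 := hq
    have hroots : {x | p.eval x * Real.exp (a * x) + eval x 0 = 0} = p.roots.toFinset := by
      ext x; simp [hp, Real.exp_ne_zero]
    rw [hroots, Set.encard_coe_eq_coe_finsetCard]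
    exact_mod_cast (Multiset.toFinset_card_le _).trans (card_roots' p)
  | succ n ih =>
    intro p q hp hq
    have hdeg := degree_derivative_add_C_mul ha p
    have hp' : derivative p + C a * p ≠ 0 := fun h => hp (by simpa [h] using hdeg.symm)
    have hderiv := hasDerivAt_eval_mul_exp_add_eval a p q
    have hrolle := encard_zeros_le_encard_deriv_zeros_add_one fun x => (hderiv x).differentiableAt
    simp only [(hderiv _).deriv] at hrolle
    refine (hrolle.trans (add_le_add_left (ih hp' hq) 1)).trans_eq ?_
    rw [natDegree_eq_of_degree_eq hdeg]
    push_cast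
    ring

theorem finite_zeros_eval_mul_exp_add_eval_and_ncard_le {a : ℝ} (ha : a ≠ 0) {p : ℝ[X]}
    (hp : p ≠ 0) (q : ℝ[X]) :
    {x | p.eval x * Real.exp (a * x) + q.eval x = 0}.Finite ∧
      ({x | p.eval x * Real.exp (a * x) + q.eval x = 0}.ncard : ℤ) ≤
        p.natDegree + (if q = 0 then -1 else (q.natDegree : ℤ)) + 1 := by
  obtain ⟨n, hn, hqn⟩ : ∃ n : ℕ, derivative^[n] q = 0 ∧
      (n : ℤ) = (if q = 0 then -1 else (q.natDegree : ℤ)) + 1 := by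
    split_ifs with hq
    · exact ⟨0, by simp [hq], by simp⟩
    · exact ⟨q.natDegree + 1, iterate_derivative_eq_zero (lt_add_one _), by push_cast; rfl⟩
  have hS := encard_zeros_eval_mul_exp_add_eval_le ha n hp hn
  rw [← Nat.cast_add, Set.encard_le_coe_iff_finite_ncard_le] at hS
  exact ⟨hS.1, by omega⟩

theorem eval_mul_exp_add_eval_mul_exp_neg_eq_zero_iff (p q : ℝ[X]) (c x : ℝ) :
    p.eval x * Real.exp (c * x) + q.eval x * Real.exp (-(c * x)) = 0 ↔
      p.eval x * Real.exp (2 * c * x) + q.eval x = 0 := by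
  have h : p.eval x * Real.exp (2 * c * x) + q.eval x =
      Real.exp (c * x) * (p.eval x * Real.exp (c * x) + q.eval x * Real.exp (-(c * x))) := by
    rw [show 2 * c * x = c * x + c * x by ring, Real.exp_add, Real.exp_neg]
    field_simp
  rw [h, mul_eq_zero, or_iff_right (Real.exp_ne_zero _)]

end Polynomial

/-- Let `p1, p2` be real polynomials, not both zero, with degrees `d1, d2`
(with the convention that the degree of the zero polynomial is `-1`), and let `c ≠ 0`.
Then `f x = p1(x) * exp (c x) + p2(x) * exp (-c x)` has at most `d1 + d2 + 1` real zeros. -/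
theorem zeros_of_poly_exp_combination
    (p1 p2 : Polynomial ℝ) (hp : ¬(p1 = 0 ∧ p2 = 0))
    (c : ℝ) (hc : c ≠ 0)
    (d1 d2 : ℤ)
    (hd1 : d1 = if p1 = 0 then -1 else (p1.natDegree : ℤ))
    (hd2 : d2 = if p2 = 0 then -1 else (p2.natDegree : ℤ))
    (f : ℝ → ℝ)
    (hf : ∀ x, f x = p1.eval x * Real.exp (c * x) + p2.eval x * Real.exp (-(c * x))) :
    {x : ℝ | f x = 0}.Finite ∧ ({x : ℝ | f x = 0}.ncard : ℤ) ≤ d1 + d2 + 1 := by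
  by_cases h1 : p1 = 0
  · have h2 : p2 ≠ 0 := fun h2 => hp ⟨h1, h2⟩
    have hzeros : {x | f x = 0} = {x | p2.eval x * Real.exp (2 * -c * x) + p1.eval x = 0} := by
      ext x
      rw [Set.mem_ofPred_eq, Set.mem_ofPred_eq, hf, add_comm,
        ← eval_mul_exp_add_eval_mul_exp_neg_eq_zero_iff, neg_mul, neg_neg]
    rw [hzeros]
    simpa [hd1, hd2, h1, h2] using
      finite_zeros_eval_mul_exp_add_eval_and_ncard_le (by simpa using hc) h2 p1
  · have hzeros : {x | f x = 0} = {x | p1.eval x * Real.exp (2 * c * x) + p2.eval x = 0} := by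
      ext x
      simp only [Set.mem_ofPred_eq, hf, eval_mul_exp_add_eval_mul_exp_neg_eq_zero_iff]
    rw [hzeros, hd1, hd2, if_neg h1]
    exact finite_zeros_eval_mul_exp_add_eval_and_ncard_le (by simpa using hc) h1 p2
end

section
/- Let k ≥ 3 be an odd integer, let c > 0, and let a_1 < a_2 < ⋯ < a_k be distinct real numbers. Consider the homogeneous linear system in (A_1, …, A_k) ∈ ℝ^k given by Σ_{j=1}^{k} A_j · a_j^l · exp(δ·c·a_j) = 0 for all l ∈ {0, 1, …, (k−3)/2} and δ ∈ {−1, +1} (a (k−1) × k system). Then the solution space of this system is exactly one-dimensional: there does not exist two linearly independent solutions, and a nonzero solution exists. -/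
/-!
Write `k = 2m + 1`. The system says that `A` is orthogonal to the `2m` rows
`j ↦ a_j ^ l * exp (± c a_j)`, so it suffices to show these rows are linearly independent.
A vanishing combination of them, multiplied by `exp (c x)`, is a function
`Q x + P x * exp (2 c x)` with `deg P, deg Q < m` vanishing at the `2m + 1` points `a_j`.
Such a function has at most `deg P + deg Q + 1` zeros unless `P = Q = 0`: by Rolle its
derivative `P' + (Q' + 2c Q) exp (2 c x)` has one zero fewer, and differentiation lowers
`deg P` while `deg (Q' + 2c Q) = deg Q` because `c ≠ 0`.
-/

open Polynomial Real Module Matrix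

theorem exists_strictMono_hasDerivAt_eq_zero {N : ℕ} {f f' : ℝ → ℝ}
    (hf : ∀ t, HasDerivAt f (f' t) t) {x : Fin (N + 1) → ℝ} (hx : StrictMono x)
    (hx0 : ∀ i, f (x i) = 0) : ∃ y : Fin N → ℝ, StrictMono y ∧ ∀ i, f' (y i) = 0 := by
  have hcont : Continuous f := continuous_iff_continuousAt.2 fun t => (hf t).continuousAt
  have hrolle (i : Fin N) : ∃ t ∈ Set.Ioo (x i.castSucc) (x i.succ), f' t = 0 :=
    exists_hasDerivAt_eq_zero (hx i.castSucc_lt_succ) hcont.continuousOn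
      (by rw [hx0, hx0]) fun t _ => hf t
  choose y hy hy0 using hrolle
  refine ⟨y, fun i j hij => ?_, hy0⟩
  calc y i < x i.succ := (hy i).2
    _ ≤ x j.castSucc := hx.monotone (Fin.succ_le_castSucc_iff.2 hij)
    _ < y j := (hy j).1

namespace Polynomial

theorem eq_zero_of_derivative_add_smul_eq_zero {R : Type*} [Semiring R] [NoZeroDivisors R]
    {r : R} (hr : r ≠ 0) {p : R[X]} (h : derivative p + r • p = 0) : p = 0 := by
  have hlead : r * p.leadingCoeff = 0 := by
    simpa [coeff_derivative, coeff_eq_zero_of_natDegree_lt (Nat.lt_succ_self _)] using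
      congrArg (coeff · p.natDegree) h
  exact leadingCoeff_eq_zero.1 ((mul_eq_zero.1 hlead).resolve_left hr)

theorem natDegree_derivative_add_smul_le {R : Type*} [Semiring R] (r : R) (p : R[X]) :
    (derivative p + r • p).natDegree ≤ p.natDegree :=
  (natDegree_add_le _ _).trans <|
    max_le ((natDegree_derivative_le p).trans (Nat.sub_le _ _)) (natDegree_smul_le _ _)

theorem eval_ofFn {R : Type*} [CommSemiring R] [DecidableEq R] (n : ℕ) (v : Fin n → R) (x : R) :
    (ofFn n v).eval x = ∑ i, v i * x ^ (i : ℕ) := by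
  simp [ofFn_eq_sum_monomial, eval_finsetSum]

theorem hasDerivAt_eval_add_eval_mul_exp (P Q : ℝ[X]) (μ t : ℝ) :
    HasDerivAt (fun s => P.eval s + Q.eval s * exp (μ * s))
      ((derivative P).eval t + (derivative Q + μ • Q).eval t * exp (μ * t)) t := by
  have hexp : HasDerivAt (fun s => exp (μ * s)) (exp (μ * t) * μ) t := by
    simpa using ((hasDerivAt_id t).const_mul μ).exp
  refine ((P.hasDerivAt t).add ((Q.hasDerivAt t).mul hexp)).congr_deriv ?_
  simp only [eval_add, eval_smul, smul_eq_mul]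
  ring

theorem eq_zero_of_eval_add_eval_mul_exp_eq_zero {μ : ℝ} (hμ : μ ≠ 0) {P Q : ℝ[X]}
    {N : ℕ} (hN : P.natDegree + Q.natDegree + 2 ≤ N) {x : Fin N → ℝ} (hx : StrictMono x)
    (h : ∀ i, P.eval (x i) + Q.eval (x i) * exp (μ * x i) = 0) : P = 0 ∧ Q = 0 := by
  induction hd : P.natDegree using Nat.strong_induction_on generalizing P Q N with
  | _ d ih =>
  obtain ⟨N, rfl⟩ : ∃ N', N = N' + 1 := ⟨N - 1, by omega⟩
  obtain ⟨y, hy, hy0⟩ :=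
    exists_strictMono_hasDerivAt_eq_zero (hasDerivAt_eval_add_eval_mul_exp P Q μ) hx h
  have hQ' := natDegree_derivative_add_smul_le μ Q
  rcases Nat.eq_zero_or_pos d with rfl | hd0
  · have hQ : Q = 0 := by
      refine eq_zero_of_derivative_add_smul_eq_zero hμ
        (eq_zero_of_natDegree_lt_card_of_eval_eq_zero _ hy.injective (fun i => ?_)
          (by simp only [Fintype.card_fin]; omega))
      simpa [derivative_of_natDegree_zero hd, exp_ne_zero] using hy0 i
    refine ⟨?_, hQ⟩
    rw [eq_C_of_natDegree_eq_zero hd] at h ⊢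
    simpa [hQ] using h 0
  · have hP'deg : (derivative P).natDegree < d := hd ▸ natDegree_derivative_lt (by omega)
    obtain ⟨hP', -⟩ := ih _ hP'deg (by omega) hy hy0 rfl
    have := derivative_eq_zero.1 hP'
    omega

end Polynomial

theorem Matrix.finrank_ker_mulVecLin_of_linearIndependent_row {K m n : Type*} [Field K]
    [Fintype m] [Fintype n] {M : Matrix m n K} (h : LinearIndependent K M.row) :
    finrank K (LinearMap.ker M.mulVecLin) = Fintype.card n - Fintype.card m := by
  have hrank : finrank K (LinearMap.range M.mulVecLin) = Fintype.card m := h.rank_matrix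
  have := LinearMap.finrank_range_add_finrank_ker M.mulVecLin
  rw [finrank_fintype_fun_eq_card] at this
  omega

theorem Submodule.exists_ne_zero_and_pair_dependent_of_finrank_eq_one {K V : Type*} [Field K]
    [AddCommGroup V] [Module K V] {W : Submodule K V} (hW : finrank K W = 1) :
    (∃ v ∈ W, v ≠ 0) ∧
      ∀ v ∈ W, ∀ w ∈ W,
        ∃ α β : K, ¬(α = 0 ∧ β = 0) ∧ α • v + β • w = 0 := by
  obtain ⟨u, hu, hspan⟩ := finrank_eq_one_iff'.1 hW
  refine ⟨⟨u, u.2, by simpa using hu⟩, fun v hv w hw => ?_⟩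
  obtain ⟨s, hs⟩ := hspan ⟨v, hv⟩
  obtain ⟨t, ht⟩ := hspan ⟨w, hw⟩
  have hv : v = s • (u : V) := by simpa using congrArg Subtype.val hs.symm
  have hw : w = t • (u : V) := by simpa using congrArg Subtype.val ht.symm
  by_cases hs0 : s = 0
  · exact ⟨1, 0, by simp, by simp [hv, hs0]⟩
  · refine ⟨t, -s, fun h => hs0 (neg_eq_zero.1 h.2), ?_⟩
    rw [hv, hw]
    module

noncomputable def kernelPacketMatrix (m : ℕ) (c : ℝ) {n : ℕ} (a : Fin n → ℝ) :
    Matrix (Fin m × Bool) (Fin n) ℝ :=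
  fun r j => a j ^ (r.1 : ℕ) * exp ((if r.2 then 1 else -1) * c * a j)

section kernelPacketMatrix

variable {m n : ℕ} {c : ℝ} {a : Fin n → ℝ}

theorem mulVec_kernelPacketMatrix_eq_zero_iff (A : Fin n → ℝ) :
    kernelPacketMatrix m c a *ᵥ A = 0 ↔
      ∀ l < m, ∀ δ : ℝ, (δ = 1 ∨ δ = -1) →
        ∑ j, A j * a j ^ l * exp (δ * c * a j) = 0 := by
  have happly (r : Fin m × Bool) : (kernelPacketMatrix m c a *ᵥ A) r =
      ∑ j, A j * a j ^ (r.1 : ℕ) * exp ((if r.2 then 1 else -1) * c * a j) := by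
    simp only [Matrix.mulVec, dotProduct, kernelPacketMatrix]
    exact Finset.sum_congr rfl fun j _ => by ring
  constructor
  · rintro h l hl δ (rfl | rfl)
    · simpa [happly] using congrFun h (⟨l, hl⟩, true)
    · simpa [happly] using congrFun h (⟨l, hl⟩, false)
  · intro h
    funext r
    rw [happly]
    exact h r.1 r.1.isLt _ (by cases r.2 <;> simp)

theorem vecMul_kernelPacketMatrix_mul_exp (v : Fin m × Bool → ℝ) (j : Fin n) :
    (v ᵥ* kernelPacketMatrix m c a) j * exp (c * a j) =
      (ofFn m fun l => v (l, false)).eval (a j) +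
        (ofFn m fun l => v (l, true)).eval (a j) * exp (2 * c * a j) := by
  have h2 : exp (2 * c * a j) = exp (c * a j) * exp (c * a j) := by rw [← exp_add]; ring_nf
  have hneg : exp (-1 * c * a j) * exp (c * a j) = 1 := by rw [← exp_add]; simp
  simp only [Matrix.vecMul, dotProduct, kernelPacketMatrix, Fintype.sum_prod_type,
    Fintype.sum_bool, eval_ofFn, Finset.sum_mul, ← Finset.sum_add_distrib, if_true,
    Bool.false_eq_true, if_false, one_mul, h2]
  refine Finset.sum_congr rfl fun l _ => ?_
  linear_combination v (l, false) * a j ^ (l : ℕ) * hneg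

theorem linearIndependent_row_kernelPacketMatrix {a : Fin (2 * m + 1) → ℝ} (hc : c ≠ 0)
    (ha : StrictMono a) : LinearIndependent ℝ (kernelPacketMatrix m c a).row := by
  rw [← Matrix.vecMul_injective_iff, ← Matrix.coe_vecMulLinear, injective_iff_map_eq_zero]
  intro v hv
  rcases m.eq_zero_or_pos with rfl | hm
  · exact funext fun r => r.1.elim0
  have hdeg (b : Bool) : (ofFn m fun l => v (l, b)).natDegree < m := ofFn_natDegree_lt hm _
  obtain ⟨hQ, hP⟩ := eq_zero_of_eval_add_eval_mul_exp_eq_zero (mul_ne_zero two_ne_zero hc)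
    (P := ofFn m fun l => v (l, false)) (Q := ofFn m fun l => v (l, true))
    (by linarith [hdeg false, hdeg true]) ha fun j => by
      rw [← vecMul_kernelPacketMatrix_mul_exp, ← Matrix.vecMulLinear_apply, hv, Pi.zero_apply,
        zero_mul]
  funext ⟨l, b⟩
  have hcoeff (b : Bool) (h : (ofFn m fun l => v (l, b)) = 0) : v (l, b) = 0 := by
    simpa using congrArg (coeff · l) h
  cases b
  · exact hcoeff false hQ
  · exact hcoeff true hP

end kernelPacketMatrix

/-- For odd `k ≥ 3`, `c > 0`, and points `a_1 < ⋯ < a_k`, the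
`(k-1) × k` homogeneous system `∑_j A_j a_j^l exp(δ c a_j) = 0`
(`l = 0, …, (k-3)/2`, `δ = ±1`) has a one-dimensional solution space: a nonzero
solution exists and any two solutions are linearly dependent. -/
theorem kernel_packet_system_solution_space_one_dimensional
    (k : ℕ) (hk3 : 3 ≤ k) (hkodd : Odd k) (c : ℝ) (hc : 0 < c)
    (a : Fin k → ℝ) (ha : StrictMono a) :
    (∃ A : Fin k → ℝ, A ≠ 0 ∧
      ∀ l ≤ (k - 3) / 2, ∀ δ : ℝ, (δ = 1 ∨ δ = -1) →
        ∑ j, A j * a j ^ l * Real.exp (δ * c * a j) = 0) ∧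
    (∀ A B : Fin k → ℝ,
      (∀ l ≤ (k - 3) / 2, ∀ δ : ℝ, (δ = 1 ∨ δ = -1) →
        ∑ j, A j * a j ^ l * Real.exp (δ * c * a j) = 0) →
      (∀ l ≤ (k - 3) / 2, ∀ δ : ℝ, (δ = 1 ∨ δ = -1) →
        ∑ j, B j * a j ^ l * Real.exp (δ * c * a j) = 0) →
      ∃ α β : ℝ, ¬(α = 0 ∧ β = 0) ∧ α • A + β • B = 0) := by
  obtain ⟨m, rfl⟩ : ∃ m, k = 2 * m + 1 := by
    obtain ⟨t, ht⟩ := hkodd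
    exact ⟨t, by omega⟩
  set W := LinearMap.ker (kernelPacketMatrix m c a).mulVecLin
  have hsystem (A : Fin (2 * m + 1) → ℝ) :
      (∀ l ≤ (2 * m + 1 - 3) / 2, ∀ δ : ℝ, (δ = 1 ∨ δ = -1) →
        ∑ j, A j * a j ^ l * exp (δ * c * a j) = 0) ↔ A ∈ W := by
    have hl (l : ℕ) : l ≤ (2 * m + 1 - 3) / 2 ↔ l < m := by omega
    simp only [hl, W, LinearMap.mem_ker, Matrix.mulVecLin_apply]
    exact (mulVec_kernelPacketMatrix_eq_zero_iff A).symm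
  have hW : finrank ℝ W = 1 := by
    rw [Matrix.finrank_ker_mulVecLin_of_linearIndependent_row
      (linearIndependent_row_kernelPacketMatrix hc.ne' ha)]
    simp only [Fintype.card_fin, Fintype.card_prod, Fintype.card_bool]
    omega
  obtain ⟨⟨A, hA, hA0⟩, hdep⟩ :=
    Submodule.exists_ne_zero_and_pair_dependent_of_finrank_eq_one hW
  exact ⟨⟨A, hA0, (hsystem A).2 hA⟩,
    fun A B hA hB => hdep A ((hsystem A).1 hA) B ((hsystem B).1 hB)⟩
end

section
/- Let p ≥ 0 be an integer, let c > 0, set k = 2p + 3, and let a_1 < ⋯ < a_k be distinct real numbers. For coefficients (A_1, …, A_k) ∈ ℝ^k, not all zero, define φ(x) = Σ_{j=1}^{k} A_j · K(x, a_j). Then φ is a kernel packet (i.e., a nonzero function whose support equals [a_1, a_k]) if and only if (A_1, …, A_k) is a nonzero solution to the system Σ_{j=1}^{k} A_j · a_j^l · exp(δ·c·a_j) = 0 for all l ∈ {0, …, (k−3)/2} and δ ∈ {−1, +1}. In particular, such a kernel packet of degree 2ν + 2 exists for any k distinct points. -/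
/-- The polynomial factor `P_p(u) = (p! / (2p)!) ∑_{j=0}^{p} ((p+j)! / (j! (p-j)!)) (2cu)^{p-j}`
appearing in the half-integer Matérn kernel. -/
noncomputable def maternPoly (p : ℕ) (c : ℝ) (u : ℝ) : ℝ :=
  ((p.factorial : ℝ) / ((2 * p).factorial : ℝ)) *
    ∑ j ∈ Finset.range (p + 1),
      (((p + j).factorial : ℝ) / ((j.factorial : ℝ) * ((p - j).factorial : ℝ))) *
        (2 * c * u) ^ (p - j)

/-- The half-integer Matérn kernel with smoothness `ν = p + 1/2`:
`K(x, x') = P_p(|x - x'|) exp (-c |x - x'|)`. -/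
noncomputable def maternKernel (p : ℕ) (c : ℝ) (x x' : ℝ) : ℝ :=
  maternPoly p c |x - x'| * Real.exp (-(c * |x - x'|))

open Polynomial

/-!
On each gap between consecutive nodes, `φ(x) = G(x) e^{-cx} + H(x) e^{cx}` with
`G = ∑_{a_j < x} A_j e^{c a_j} P_p(X - a_j)` and `H = ∑_{a_j > x} A_j e^{-c a_j} P_p(a_j - X)`.
Since `deg P_p = p`, a combination of translates of `P_p` vanishes iff its coefficients have
vanishing moments of order `≤ p`; so `φ = 0` beyond `a_k` (resp. before `a_1`) iff the system
with `δ = 1` (resp. `δ = -1`) holds. By Rolle's theorem a nonzero `U e^{cx} + V e^{-cx}` with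
`deg U, deg V ≤ p` has at most `2p + 1` zeros, so `x^l e^{±cx}` (`l ≤ p`) interpolate on any
`2p + 2` points. If `φ` also vanished on a gap inside `[a_1, a_k]`, both systems would hold
separately for the at most `2p + 2` nodes on either side of it, forcing `A = 0`. Existence:
the system has `2p + 2` equations in `2p + 3` unknowns.
-/

section Moments

variable {K ι : Type*} {s : Finset ι} {d b : ι → K}

lemma sum_mul_eval_eq_zero_of_moments [CommRing K] {m : ℕ}
    (h : ∀ l < m, ∑ j ∈ s, d j * b j ^ l = 0) {Q : K[X]} (hQ : Q ∈ degreeLT K m) :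
    ∑ j ∈ s, d j * Q.eval (b j) = 0 := by
  simp_rw [eval_eq_sum_degreeLTEquiv hQ, Finset.mul_sum]
  rw [Finset.sum_comm]
  refine Finset.sum_eq_zero fun i _ => ?_
  simp_rw [mul_left_comm (d _), ← Finset.mul_sum, h i i.isLt, mul_zero]

lemma sum_mul_eval_eq_of_moments_lt [CommRing K] {R : K[X]} (hR : R ≠ 0)
    (h : ∀ l < R.natDegree, ∑ j ∈ s, d j * b j ^ l = 0) :
    ∑ j ∈ s, d j * R.eval (b j) = R.leadingCoeff * ∑ j ∈ s, d j * b j ^ R.natDegree := by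
  have hlow : R.eraseLead ∈ degreeLT K R.natDegree := by
    rw [mem_degreeLT, ← degree_eq_natDegree hR]
    exact degree_eraseLead_lt hR
  conv_lhs => rw [← eraseLead_add_C_mul_X_pow R]
  simp only [eval_add, eval_mul, eval_C, eval_pow, eval_X, mul_add, Finset.sum_add_distrib,
    sum_mul_eval_eq_zero_of_moments h hlow, zero_add, Finset.mul_sum]
  exact Finset.sum_congr rfl fun j _ => by ring

variable [Field K] [CharZero K]

theorem sum_C_mul_comp_C_sub_X_eq_zero_iff {R : K[X]} (hR : R ≠ 0) :
    ∑ j ∈ s, C (d j) * R.comp (C (b j) - X) = 0 ↔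
      ∀ l ≤ R.natDegree, ∑ j ∈ s, d j * b j ^ l = 0 := by
  refine ⟨fun h => ?_, fun h => Polynomial.funext fun x => ?_⟩
  -- The lower moments come from `R'`; once they vanish, evaluating at `0` isolates the top one.
  · induction hn : R.natDegree using Nat.strong_induction_on generalizing R with
    | _ n ih =>
    have hlow : ∀ l < n, ∑ j ∈ s, d j * b j ^ l = 0 := by
      intro l hl
      have hR' : derivative R ≠ 0 := fun h0 => by
        have := derivative_eq_zero.mp h0
        omega
      refine ih (n - 1) (by omega) hR' ?_ (by simp [hn]) l (by omega)
      have := congrArg derivative h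
      simpa [derivative_comp] using this
    have htop := sum_mul_eval_eq_of_moments_lt hR (hn ▸ hlow)
    have h0 := congrArg (eval 0) h
    simp only [eval_finsetSum, eval_mul, eval_C, eval_comp, eval_sub, eval_X, sub_zero,
      eval_zero] at h0
    rw [htop, hn] at h0
    intro l hl
    rcases hl.lt_or_eq with hl | rfl
    · exact hlow l hl
    · exact (mul_eq_zero.mp h0).resolve_left (leadingCoeff_ne_zero.mpr hR)
  · have hmem : taylor (-x) R ∈ degreeLT K (R.natDegree + 1) := by
      rw [taylor_mem_degreeLT, mem_degreeLT]
      exact degree_le_natDegree.trans_lt (by exact_mod_cast Nat.lt_succ_self _)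
    simpa [eval_finsetSum, taylor_eval, ← sub_eq_add_neg] using
      sum_mul_eval_eq_zero_of_moments (fun l hl => h l (Nat.lt_succ_iff.mp hl)) hmem

theorem sum_C_mul_comp_X_sub_C_eq_zero_iff {R : K[X]} (hR : R ≠ 0) :
    ∑ j ∈ s, C (d j) * R.comp (X - C (b j)) = 0 ↔
      ∀ l ≤ R.natDegree, ∑ j ∈ s, d j * b j ^ l = 0 := by
  have hR' : R.comp (-X) ≠ 0 := fun h0 => hR (by
    simpa [comp_assoc] using congrArg (·.comp (-X : K[X])) h0)
  have hdeg : (R.comp (-X)).natDegree = R.natDegree := by simp [natDegree_comp]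
  simp_rw [← hdeg, ← sum_C_mul_comp_C_sub_X_eq_zero_iff hR', comp_assoc]
  simp

end Moments

section ExpPoly

lemma exists_finset_deriv_eq_zero {f : ℝ → ℝ} (hf : Continuous f) {S : Finset ℝ}
    (hS : ∀ x ∈ S, f x = 0) :
    ∃ T : Finset ℝ, S.card ≤ T.card + 1 ∧ ∀ z ∈ T, deriv f z = 0 := by
  have rolle : ∀ x ∈ S, ∀ y ∈ S, x < y → ∃ z ∈ Set.Ioo x y, deriv f z = 0 :=
    fun x hx y hy hxy =>
      exists_deriv_eq_zero hxy hf.continuousOn ((hS x hx).trans (hS y hy).symm)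
  choose! z hz using rolle
  refine ⟨((S ×ˢ S).filter fun q => q.1 < q.2).image fun q => z q.1 q.2, ?_, ?_⟩
  · refine Finset.card_le_of_interleaved fun x hx y hy hxy _ => ?_
    exact ⟨z x y, Finset.mem_image.mpr ⟨(x, y), by simp [hx, hy, hxy], rfl⟩,
      (hz x hx y hy hxy).1.1, (hz x hx y hy hxy).1.2⟩
  · simp only [Finset.mem_image, Finset.mem_filter, Finset.mem_product]
    rintro _ ⟨⟨x, y⟩, ⟨⟨hx, hy⟩, hxy⟩, rfl⟩
    exact (hz x hx y hy hxy).2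

lemma hasDerivAt_eval_add_exp_mul_eval (μ : ℝ) (P Q : ℝ[X]) (x : ℝ) :
    HasDerivAt (fun y => P.eval y + Real.exp (μ * y) * Q.eval y)
      ((derivative P).eval x + Real.exp (μ * x) * (derivative Q + C μ * Q).eval x) x := by
  have hexp : HasDerivAt (fun y => Real.exp (μ * y)) (Real.exp (μ * x) * μ) x := by
    simpa using ((hasDerivAt_id x).const_mul μ).exp
  refine ((P.hasDerivAt x).add (hexp.mul (Q.hasDerivAt x))).congr_deriv ?_
  simp only [eval_add, eval_mul, eval_C]
  ring

lemma derivative_add_C_mul_ne_zero {μ : ℝ} (hμ : μ ≠ 0) {Q : ℝ[X]} (hQ : Q ≠ 0) :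
    derivative Q + C μ * Q ≠ 0 := by
  intro h
  have := congrArg (coeff · Q.natDegree) h
  simp only [coeff_add, coeff_derivative, coeff_C_mul, coeff_zero,
    coeff_natDegree_succ_eq_zero, zero_mul, zero_add] at this
  exact mul_ne_zero hμ (leadingCoeff_ne_zero.mpr hQ) this

lemma natDegree_derivative_add_C_mul_le (μ : ℝ) (Q : ℝ[X]) :
    (derivative Q + C μ * Q).natDegree ≤ Q.natDegree :=
  natDegree_add_le_of_degree_le ((natDegree_derivative_le Q).trans (Nat.sub_le _ _))
    (natDegree_C_mul_le _ _)

lemma exists_finset_zeros_derivative_eval_add_exp_mul_eval (μ : ℝ) (P Q : ℝ[X])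
    {S : Finset ℝ} (hS : ∀ x ∈ S, P.eval x + Real.exp (μ * x) * Q.eval x = 0) :
    ∃ T : Finset ℝ, S.card ≤ T.card + 1 ∧ ∀ z ∈ T,
      (derivative P).eval z + Real.exp (μ * z) * (derivative Q + C μ * Q).eval z = 0 := by
  obtain ⟨T, hST, hT⟩ := exists_finset_deriv_eq_zero (by fun_prop) hS
  exact ⟨T, hST, fun z hz => (hasDerivAt_eval_add_exp_mul_eval μ P Q z).deriv ▸ hT z hz⟩

/-- Each derivative lowers `deg P` and keeps the form, with `Q` replaced by `Q' + μ Q`. -/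
lemma card_le_of_eval_add_exp_mul_eval_eq_zero {μ : ℝ} (hμ : μ ≠ 0) {P Q : ℝ[X]}
    (hQ : Q ≠ 0) {S : Finset ℝ}
    (hS : ∀ x ∈ S, P.eval x + Real.exp (μ * x) * Q.eval x = 0) :
    S.card ≤ P.natDegree + Q.natDegree + 1 := by
  induction hd : P.natDegree generalizing P Q S with
  | zero =>
    obtain ⟨T, hST, hT⟩ := exists_finset_zeros_derivative_eval_add_exp_mul_eval μ P Q hS
    have hR := derivative_add_C_mul_ne_zero hμ hQ
    have hRQ := natDegree_derivative_add_C_mul_le μ Q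
    have hTR : T.card ≤ (derivative Q + C μ * Q).natDegree := by
      by_contra! h
      refine hR (eq_zero_of_natDegree_lt_card_of_eval_eq_zero' _ T (fun z hz => ?_) h)
      simpa [derivative_of_natDegree_zero hd] using hT z hz
    omega
  | succ d ih =>
    obtain ⟨T, hST, hT⟩ := exists_finset_zeros_derivative_eval_add_exp_mul_eval μ P Q hS
    have hTd := ih (derivative_add_C_mul_ne_zero hμ hQ) hT (by simp [hd])
    have hRQ := natDegree_derivative_add_C_mul_le μ Q
    omega

noncomputable def expPoly (c : ℝ) (U V : ℝ[X]) (x : ℝ) : ℝ :=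
  U.eval x * Real.exp (c * x) + V.eval x * Real.exp (-c * x)

lemma expPoly_eq_exp_mul (c : ℝ) (U V : ℝ[X]) (x : ℝ) :
    expPoly c U V x = Real.exp (c * x) * (U.eval x + Real.exp (-2 * c * x) * V.eval x) := by
  rw [expPoly, mul_add, ← mul_assoc, ← Real.exp_add]
  ring_nf

lemma eq_zero_of_expPoly_eq_zero {c : ℝ} (hc : c ≠ 0) {p : ℕ} {U V : ℝ[X]}
    (hU : U.natDegree ≤ p) (hV : V.natDegree ≤ p) {S : Finset ℝ} (hS : 2 * p + 2 ≤ S.card)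
    (h : ∀ x ∈ S, expPoly c U V x = 0) : U = 0 ∧ V = 0 := by
  have h' : ∀ x ∈ S, U.eval x + Real.exp (-2 * c * x) * V.eval x = 0 := fun x hx => by
    simpa [expPoly_eq_exp_mul, Real.exp_ne_zero] using h x hx
  have hV0 : V = 0 := by
    by_contra hV0
    have := card_le_of_eval_add_exp_mul_eval_eq_zero (by simpa using hc) hV0 h'
    omega
  subst hV0
  exact ⟨eq_zero_of_natDegree_lt_card_of_eval_eq_zero' U S (by simpa using h') (by omega), rfl⟩

lemma eq_zero_of_expPoly_eq_zero_of_infinite {c : ℝ} (hc : c ≠ 0) {U V : ℝ[X]} {s : Set ℝ}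
    (hs : s.Infinite) (h : ∀ x ∈ s, expPoly c U V x = 0) : U = 0 ∧ V = 0 := by
  obtain ⟨S, hSs, hS⟩ := hs.exists_subset_card_eq (2 * max U.natDegree V.natDegree + 2)
  exact eq_zero_of_expPoly_eq_zero hc (le_max_left _ _) (le_max_right _ _) hS.ge
    fun x hx => h x (hSs hx)

lemma exists_expPoly_eq {c : ℝ} (hc : c ≠ 0) {p : ℕ} {S : Finset ℝ}
    (hS : S.card ≤ 2 * p + 2) (f : ℝ → ℝ) :
    ∃ U ∈ degreeLT ℝ (p + 1), ∃ V ∈ degreeLT ℝ (p + 1),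
      ∀ x ∈ S, expPoly c U V x = f x := by
  obtain ⟨S', hSS', hS'⟩ := Infinite.exists_superset_card_eq S (2 * p + 2) hS
  let E : (degreeLT ℝ (p + 1) × degreeLT ℝ (p + 1)) →ₗ[ℝ] (S' → ℝ) :=
    { toFun := fun w x => expPoly c w.1 w.2 x
      map_add' := fun _ _ => by
        ext
        simp only [expPoly, Prod.fst_add, Prod.snd_add, Submodule.coe_add, eval_add, Pi.add_apply]
        ring
      map_smul' := fun _ _ => by
        ext
        simp only [expPoly, Prod.smul_fst, Prod.smul_snd, SetLike.val_smul, eval_smul,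
          smul_eq_mul, Real.ringHom_apply, Pi.smul_apply]
        ring }
  have hE : Function.Injective E := by
    rw [injective_iff_map_eq_zero]
    rintro ⟨⟨U, hU⟩, ⟨V, hV⟩⟩ hUV
    have hdeg : ∀ W ∈ degreeLT ℝ (p + 1), W.natDegree ≤ p := fun W hW =>
      natDegree_le_of_degree_le (Order.le_of_lt_succ (mem_degreeLT.mp hW))
    obtain ⟨rfl, rfl⟩ := eq_zero_of_expPoly_eq_zero hc (hdeg U hU) (hdeg V hV) hS'.ge
      fun x hx => congrFun hUV ⟨x, hx⟩
    rfl
  have hdim : Module.finrank ℝ (degreeLT ℝ (p + 1) × degreeLT ℝ (p + 1)) =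
      Module.finrank ℝ (S' → ℝ) := by
    simp only [Module.finrank_prod, (degreeLTEquiv ℝ (p + 1)).finrank_eq,
      Module.finrank_fintype_fun_eq_card, Fintype.card_fin, Fintype.card_coe, hS']
    ring
  obtain ⟨⟨⟨U, hU⟩, ⟨V, hV⟩⟩, hUV⟩ :=
    (LinearMap.injective_iff_surjective_of_finrank_eq_finrank hdim).mp hE fun x => f x
  exact ⟨U, hU, V, hV, fun x hx => congrFun hUV ⟨x, hSS' hx⟩⟩

end ExpPoly

section ExpMoments

variable {ι : Type*} (p : ℕ) (μ : ℝ) (b d : ι → ℝ) (s : Finset ι)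

def ExpMomentsVanish : Prop :=
  ∀ l ≤ p, ∑ j ∈ s, d j * b j ^ l * Real.exp (μ * b j) = 0

variable {p μ b d s}

lemma ExpMomentsVanish.sum_mul_eval_mul_exp_eq_zero (h : ExpMomentsVanish p μ b d s) {U : ℝ[X]}
    (hU : U ∈ degreeLT ℝ (p + 1)) :
    ∑ j ∈ s, d j * U.eval (b j) * Real.exp (μ * b j) = 0 := by
  have h' : ∀ l < p + 1, ∑ j ∈ s, d j * Real.exp (μ * b j) * b j ^ l = 0 := fun l hl => by
    simpa only [mul_right_comm] using h l (Nat.lt_succ_iff.mp hl)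
  simpa only [mul_right_comm] using sum_mul_eval_eq_zero_of_moments h' hU

lemma ExpMomentsVanish.compl_iff [Fintype ι] [DecidableEq ι]
    (h : ExpMomentsVanish p μ b d Finset.univ) :
    ExpMomentsVanish p μ b d sᶜ ↔ ExpMomentsVanish p μ b d s := by
  refine forall₂_congr fun l hl => ?_
  have := Finset.sum_add_sum_compl s fun j => d j * b j ^ l * Real.exp (μ * b j)
  rw [h l hl] at this
  constructor <;> intro <;> linarith

/-- The functions `x^l e^{±cx}`, `l ≤ p`, interpolate any data on `2p + 2` points, so the moments
of `d` against them determine `d` there. -/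
lemma eq_zero_of_expMomentsVanish {c : ℝ} (hc : c ≠ 0) (hs : s.card ≤ 2 * p + 2)
    (hb : Set.InjOn b s) (hpos : ExpMomentsVanish p c b d s)
    (hneg : ExpMomentsVanish p (-c) b d s) : ∀ i ∈ s, d i = 0 := by
  classical
  intro i hi
  obtain ⟨U, hU, V, hV, hUV⟩ := exists_expPoly_eq hc (Finset.card_image_le.trans hs)
    fun x => if x = b i then 1 else 0
  calc d i = ∑ j ∈ s, d j * (if b j = b i then 1 else 0) := by
        rw [Finset.sum_eq_single_of_mem i hi fun j hj hji => by
          rw [if_neg fun h => hji (hb hj hi h), mul_zero]]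
        simp
    _ = ∑ j ∈ s, d j * expPoly c U V (b j) :=
        Finset.sum_congr rfl fun j hj => by rw [hUV _ (Finset.mem_image_of_mem b hj)]
    _ = 0 := by
        simp only [expPoly, mul_add, Finset.sum_add_distrib, ← mul_assoc,
          hpos.sum_mul_eval_mul_exp_eq_zero hU, hneg.sum_mul_eval_mul_exp_eq_zero hV, add_zero]

lemma forall_sign_sum_eq_zero_iff_expMomentsVanish {c : ℝ} :
    (∀ l ≤ p, ∀ δ : ℝ, (δ = 1 ∨ δ = -1) →
        ∑ j ∈ s, d j * b j ^ l * Real.exp (δ * c * b j) = 0) ↔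
      ExpMomentsVanish p c b d s ∧ ExpMomentsVanish p (-c) b d s := by
  simp only [ExpMomentsVanish, or_imp, forall_and, forall_eq, one_mul, neg_one_mul]

lemma exists_ne_zero_expMomentsVanish [Fintype ι] (hcard : 2 * p + 2 < Fintype.card ι)
    (c : ℝ) (b : ι → ℝ) :
    ∃ d ≠ 0, ExpMomentsVanish p c b d Finset.univ ∧
      ExpMomentsVanish p (-c) b d Finset.univ := by
  let v : ι → (Fin (p + 1) → ℝ) × (Fin (p + 1) → ℝ) := fun j =>
    (fun l => b j ^ (l : ℕ) * Real.exp (c * b j), fun l => b j ^ (l : ℕ) * Real.exp (-c * b j))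
  have hdep : ¬ LinearIndependent ℝ v := fun hv => by
    have := hv.fintype_card_le_finrank
    simp only [Module.finrank_prod, Module.finrank_fin_fun] at this
    omega
  obtain ⟨d, hd, i, hi⟩ := Fintype.not_linearIndependent_iff.mp hdep
  refine ⟨d, fun h => hi (congrFun h i), fun l hl => ?_, fun l hl => ?_⟩
  · simpa [v, mul_assoc, Prod.fst_sum, Finset.sum_apply] using
      congrFun (congrArg Prod.fst hd) ⟨l, by omega⟩
  · simpa [v, mul_assoc, Prod.snd_sum, Finset.sum_apply] using
      congrFun (congrArg Prod.snd hd) ⟨l, by omega⟩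

end ExpMoments

section Matern

variable (p : ℕ) (c : ℝ)

noncomputable def maternPolynomial : ℝ[X] :=
  ∑ j ∈ Finset.range (p + 1),
    C ((p.factorial : ℝ) / (2 * p).factorial *
        ((p + j).factorial / (j.factorial * (p - j).factorial)) * (2 * c) ^ (p - j)) *
      X ^ (p - j)

lemma eval_maternPolynomial (u : ℝ) : (maternPolynomial p c).eval u = maternPoly p c u := by
  simp only [maternPolynomial, maternPoly, eval_finsetSum, eval_mul, eval_C, eval_pow, eval_X,
    Finset.mul_sum, mul_pow]
  exact Finset.sum_congr rfl fun _ _ => by ring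

variable {p c}

lemma coeff_maternPolynomial_ne_zero (hc : c ≠ 0) : (maternPolynomial p c).coeff p ≠ 0 := by
  rw [maternPolynomial, finsetSum_coeff, Finset.sum_eq_single 0 (fun j hj hj0 => ?_) (by simp),
    coeff_C_mul_X_pow, if_pos (Nat.sub_zero p).symm]
  · simp [hc, Nat.factorial_ne_zero]
  · rw [coeff_C_mul_X_pow, if_neg (by rw [Finset.mem_range] at hj; omega)]

lemma maternPolynomial_ne_zero (hc : c ≠ 0) : maternPolynomial p c ≠ 0 := fun h =>
  coeff_maternPolynomial_ne_zero hc (by rw [h, coeff_zero])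

lemma natDegree_maternPolynomial (hc : c ≠ 0) : (maternPolynomial p c).natDegree = p :=
  natDegree_eq_of_le_of_coeff_ne_zero
    (natDegree_sum_le_of_forall_le _ _ fun _ _ =>
      (natDegree_C_mul_X_pow_le _ _).trans (Nat.sub_le _ _))
    (coeff_maternPolynomial_ne_zero hc)

lemma maternKernel_of_le {x x' : ℝ} (h : x' ≤ x) :
    maternKernel p c x x' =
      (maternPolynomial p c).eval (x - x') * Real.exp (c * x') * Real.exp (-c * x) := by
  rw [maternKernel, abs_of_nonneg (sub_nonneg.mpr h), eval_maternPolynomial, mul_assoc,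
    ← Real.exp_add]
  ring_nf

lemma maternKernel_of_ge {x x' : ℝ} (h : x ≤ x') :
    maternKernel p c x x' =
      (maternPolynomial p c).eval (x' - x) * Real.exp (-c * x') * Real.exp (c * x) := by
  rw [maternKernel, abs_of_nonpos (sub_nonpos.mpr h), neg_sub, eval_maternPolynomial, mul_assoc,
    ← Real.exp_add]
  ring_nf

end Matern

section KernelSum

variable {ι : Type*} (p : ℕ) (c : ℝ) (a A : ι → ℝ)

noncomputable def maternLeftPoly (s : Finset ι) : ℝ[X] :=
  ∑ j ∈ s, C (A j * Real.exp (c * a j)) * (maternPolynomial p c).comp (X - C (a j))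

noncomputable def maternRightPoly (s : Finset ι) : ℝ[X] :=
  ∑ j ∈ s, C (A j * Real.exp (-c * a j)) * (maternPolynomial p c).comp (C (a j) - X)

lemma sum_maternKernel_eq_expPoly [Fintype ι] [DecidableEq ι] {s : Finset ι} {x : ℝ}
    (hs : ∀ j ∈ s, a j ≤ x) (hsc : ∀ j ∉ s, x ≤ a j) :
    ∑ j, A j * maternKernel p c x (a j) =
      expPoly c (maternRightPoly p c a A sᶜ) (maternLeftPoly p c a A s) x := by
  rw [← Finset.sum_add_sum_compl s, add_comm, expPoly, maternLeftPoly, maternRightPoly,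
    eval_finsetSum, eval_finsetSum, Finset.sum_mul, Finset.sum_mul]
  congr 1 <;> refine Finset.sum_congr rfl fun j hj => ?_
  · rw [maternKernel_of_ge (hsc j (Finset.mem_compl.mp hj))]
    simp only [eval_mul, eval_C, eval_comp, eval_sub, eval_X]
    ring
  · rw [maternKernel_of_le (hs j hj)]
    simp only [eval_mul, eval_C, eval_comp, eval_sub, eval_X]
    ring

variable {p c}

lemma maternLeftPoly_eq_zero_iff (hc : c ≠ 0) (s : Finset ι) :
    maternLeftPoly p c a A s = 0 ↔ ExpMomentsVanish p c a A s := by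
  rw [maternLeftPoly, sum_C_mul_comp_X_sub_C_eq_zero_iff (maternPolynomial_ne_zero hc),
    natDegree_maternPolynomial hc]
  simp only [ExpMomentsVanish, mul_right_comm _ (Real.exp _)]

lemma maternRightPoly_eq_zero_iff (hc : c ≠ 0) (s : Finset ι) :
    maternRightPoly p c a A s = 0 ↔ ExpMomentsVanish p (-c) a A s := by
  rw [maternRightPoly, sum_C_mul_comp_C_sub_X_eq_zero_iff (maternPolynomial_ne_zero hc),
    natDegree_maternPolynomial hc]
  simp only [ExpMomentsVanish, mul_right_comm _ (Real.exp _)]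

end KernelSum

section Support

variable {ι : Type*} [Fintype ι] {p : ℕ} {c : ℝ} {a A : ι → ℝ}

lemma forall_lt_imp_sum_maternKernel_eq_zero_iff (hc : c ≠ 0) :
    (∀ x, (∀ j, a j < x) → ∑ j, A j * maternKernel p c x (a j) = 0) ↔
      ExpMomentsVanish p c a A Finset.univ := by
  classical
  have hrep : ∀ x, (∀ j, a j < x) →
      ∑ j, A j * maternKernel p c x (a j) = expPoly c 0 (maternLeftPoly p c a A Finset.univ) x :=
    fun x hx => by
      simpa [maternRightPoly] using
        sum_maternKernel_eq_expPoly p c a A (s := Finset.univ) (fun j _ => (hx j).le) (by simp)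
  rw [← maternLeftPoly_eq_zero_iff a A hc]
  refine ⟨fun h => ?_, fun h x hx => by simp [hrep x hx, h, expPoly]⟩
  obtain ⟨M, hM⟩ := (Set.finite_range a).bddAbove
  refine (eq_zero_of_expPoly_eq_zero_of_infinite (U := 0) hc (Set.Ioi_infinite M) fun x hx => ?_).2
  have hx' : ∀ j, a j < x := fun j => (hM (Set.mem_range_self j)).trans_lt hx
  rw [← hrep x hx', h x hx']

lemma forall_gt_imp_sum_maternKernel_eq_zero_iff (hc : c ≠ 0) :
    (∀ x, (∀ j, x < a j) → ∑ j, A j * maternKernel p c x (a j) = 0) ↔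
      ExpMomentsVanish p (-c) a A Finset.univ := by
  classical
  have hrep : ∀ x, (∀ j, x < a j) →
      ∑ j, A j * maternKernel p c x (a j) = expPoly c (maternRightPoly p c a A Finset.univ) 0 x :=
    fun x hx => by
      simpa [maternLeftPoly] using
        sum_maternKernel_eq_expPoly p c a A (s := ∅) (by simp) (fun j _ => (hx j).le)
  rw [← maternRightPoly_eq_zero_iff a A hc]
  refine ⟨fun h => ?_, fun h x hx => by simp [hrep x hx, h, expPoly]⟩
  obtain ⟨M, hM⟩ := (Set.finite_range a).bddBelow
  refine (eq_zero_of_expPoly_eq_zero_of_infinite (V := 0) hc (Set.Iio_infinite M) fun x hx => ?_).1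
  have hx' : ∀ j, x < a j := fun j => hx.trans_le (hM (Set.mem_range_self j))
  rw [← hrep x hx', h x hx']

lemma eq_zero_of_sum_maternKernel_eq_zero_on_Ioo [DecidableEq ι] (hc : c ≠ 0)
    (ha : Function.Injective a) (hpos : ExpMomentsVanish p c a A Finset.univ)
    (hneg : ExpMomentsVanish p (-c) a A Finset.univ) {s : Finset ι} (hs : s.card ≤ 2 * p + 2)
    (hsc : sᶜ.card ≤ 2 * p + 2) {u v : ℝ} (huv : u < v) (hu : ∀ j ∈ s, a j ≤ u)
    (hv : ∀ j ∉ s, v ≤ a j)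
    (hzero : ∀ x ∈ Set.Ioo u v, ∑ j, A j * maternKernel p c x (a j) = 0) :
    A = 0 := by
  obtain ⟨hR, hL⟩ := eq_zero_of_expPoly_eq_zero_of_infinite hc (Set.Ioo_infinite huv)
    fun x hx => by
      rw [← sum_maternKernel_eq_expPoly p c a A (fun j hj => (hu j hj).trans hx.1.le)
        fun j hj => hx.2.le.trans (hv j hj)]
      exact hzero x hx
  rw [maternRightPoly_eq_zero_iff a A hc] at hR
  rw [maternLeftPoly_eq_zero_iff a A hc] at hL
  have hAs := eq_zero_of_expMomentsVanish hc hs ha.injOn hL ((hneg.compl_iff).mp hR)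
  have hAsc := eq_zero_of_expMomentsVanish hc hsc ha.injOn ((hpos.compl_iff).mpr hL) hR
  funext j
  by_cases hj : j ∈ s
  exacts [hAs j hj, hAsc j (Finset.mem_compl.mpr hj)]

lemma Ioo_diff_range_subset_tsupport_sum_maternKernel (hc : c ≠ 0) (ha : Function.Injective a)
    (hcard : Fintype.card ι ≤ 2 * p + 3) (hA : A ≠ 0)
    (hpos : ExpMomentsVanish p c a A Finset.univ)
    (hneg : ExpMomentsVanish p (-c) a A Finset.univ) (i₀ i₁ : ι) :
    Set.Ioo (a i₀) (a i₁) \ Set.range a ⊆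
      tsupport fun x => ∑ j, A j * maternKernel p c x (a j) := by
  classical
  rintro y ⟨⟨hy₀, hy₁⟩, hya⟩
  by_contra hy
  have hopen :
      IsOpen ((tsupport fun x => ∑ j, A j * maternKernel p c x (a j))ᶜ ∩ (Set.range a)ᶜ) :=
    (isClosed_tsupport _).isOpen_compl.inter (Set.finite_range a).isClosed.isOpen_compl
  obtain ⟨r, hr, hball⟩ := Metric.isOpen_iff.mp hopen y ⟨hy, hya⟩
  have hgap : ∀ j, r ≤ |a j - y| := fun j => by
    by_contra! h
    exact (hball (Metric.mem_ball.mpr (by rwa [Real.dist_eq]))).2 (Set.mem_range_self j)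
  let s := Finset.univ.filter fun j => a j < y
  refine hA (eq_zero_of_sum_maternKernel_eq_zero_on_Ioo hc ha hpos hneg (s := s) ?_ ?_
    (u := y - r) (v := y + r) (by linarith) (fun j hj => ?_) (fun j hj => ?_) fun x hx => ?_)
  · have := Finset.card_lt_univ_of_notMem (x := i₁) (s := s) (by simp [s, hy₁.le])
    omega
  · have := Finset.card_lt_univ_of_notMem (x := i₀) (s := sᶜ) (by simp [s, hy₀])
    omega
  · have hjy : a j < y := (Finset.mem_filter.mp hj).2
    have := hgap j
    rw [abs_of_neg (by linarith)] at this
    linarith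
  · have hjy : y ≤ a j := by simpa [s] using hj
    have := hgap j
    rw [abs_of_nonneg (by linarith)] at this
    linarith
  · exact image_eq_zero_of_notMem_tsupport (f := fun x => ∑ j, A j * maternKernel p c x (a j))
      (hball (by rwa [Real.ball_eq_Ioo])).1

lemma Icc_subset_tsupport_sum_maternKernel (hc : c ≠ 0) (ha : Function.Injective a)
    (hcard : Fintype.card ι ≤ 2 * p + 3) (hA : A ≠ 0)
    (hpos : ExpMomentsVanish p c a A Finset.univ)
    (hneg : ExpMomentsVanish p (-c) a A Finset.univ) {i₀ i₁ : ι} (h : a i₀ < a i₁) :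
    Set.Icc (a i₀) (a i₁) ⊆ tsupport fun x => ∑ j, A j * maternKernel p c x (a j) := by
  have hdense : Dense (Set.range a)ᶜ := (Set.finite_range a).countable.dense_compl ℝ
  rw [← closure_Ioo h.ne]
  exact closure_minimal ((hdense.open_subset_closure_inter isOpen_Ioo).trans
    (closure_minimal
      (Ioo_diff_range_subset_tsupport_sum_maternKernel hc ha hcard hA hpos hneg i₀ i₁)
      (isClosed_tsupport _))) (isClosed_tsupport _)

theorem tsupport_sum_maternKernel_eq_Icc_iff (hc : c ≠ 0) (ha : Function.Injective a)
    (hcard : Fintype.card ι ≤ 2 * p + 3) (hA : A ≠ 0) {i₀ i₁ : ι} (hi : i₀ ≠ i₁)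
    (hbound : ∀ j, a i₀ ≤ a j ∧ a j ≤ a i₁) :
    tsupport (fun x => ∑ j, A j * maternKernel p c x (a j)) = Set.Icc (a i₀) (a i₁) ↔
      ExpMomentsVanish p c a A Finset.univ ∧ ExpMomentsVanish p (-c) a A Finset.univ := by
  constructor
  · intro h
    have hout : ∀ x ∉ Set.Icc (a i₀) (a i₁), ∑ j, A j * maternKernel p c x (a j) = 0 :=
      fun x hx => image_eq_zero_of_notMem_tsupport
        (f := fun x => ∑ j, A j * maternKernel p c x (a j)) (h ▸ hx)
    exact ⟨(forall_lt_imp_sum_maternKernel_eq_zero_iff hc).mp fun x hx =>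
        hout x fun hmem => (hx i₁).not_ge hmem.2,
      (forall_gt_imp_sum_maternKernel_eq_zero_iff hc).mp fun x hx =>
        hout x fun hmem => (hx i₀).not_ge hmem.1⟩
  rintro ⟨hpos, hneg⟩
  refine subset_antisymm (closure_minimal (fun x hx => ?_) isClosed_Icc)
    (Icc_subset_tsupport_sum_maternKernel hc ha hcard hA hpos hneg
      ((hbound i₁).1.lt_of_ne (ha.ne hi)))
  by_contra hxI
  rcases not_and_or.mp hxI with hlt | hgt
  · exact hx ((forall_gt_imp_sum_maternKernel_eq_zero_iff hc).mpr hneg x fun j =>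
      (not_le.mp hlt).trans_le (hbound j).1)
  · exact hx ((forall_lt_imp_sum_maternKernel_eq_zero_iff hc).mpr hpos x fun j =>
      (hbound j).2.trans_lt (not_le.mp hgt))

end Support

/-- Let `p ≥ 0`, `c > 0`, `k = 2p+3`, `a_1 < ⋯ < a_k`, and let
`A ∈ ℝ^k` be nonzero, `φ(x) = ∑_j A_j K(x, a_j)`. Then `φ` is a kernel packet
(a nonzero function with support exactly `[a_1, a_k]`) if and only if `A` solves the
system `∑_j A_j a_j^l exp(δ c a_j) = 0` (`l = 0, …, p`, `δ = ±1`). In particular, a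
kernel packet of degree `k = 2ν + 2` exists on any such set of points. -/
theorem kernel_packet_iff_system_and_existence
    (p : ℕ) (c : ℝ) (hc : 0 < c)
    (a : Fin (2 * p + 3) → ℝ) (ha : StrictMono a)
    (A : Fin (2 * p + 3) → ℝ) (hA0 : A ≠ 0)
    (φ : ℝ → ℝ) (hφ : ∀ x, φ x = ∑ j, A j * maternKernel p c x (a j)) :
    ((φ ≠ 0 ∧ closure {x : ℝ | φ x ≠ 0} =
        Set.Icc (a ⟨0, by omega⟩) (a ⟨2 * p + 2, by omega⟩)) ↔
      (∀ l ≤ p, ∀ δ : ℝ, (δ = 1 ∨ δ = -1) →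
        ∑ j, A j * a j ^ l * Real.exp (δ * c * a j) = 0)) ∧
    (∃ B : Fin (2 * p + 3) → ℝ, B ≠ 0 ∧
      (∀ l ≤ p, ∀ δ : ℝ, (δ = 1 ∨ δ = -1) →
        ∑ j, B j * a j ^ l * Real.exp (δ * c * a j) = 0) ∧
      (fun x : ℝ => ∑ j, B j * maternKernel p c x (a j)) ≠ 0 ∧
      closure {x : ℝ | (∑ j, B j * maternKernel p c x (a j)) ≠ 0} =
        Set.Icc (a ⟨0, by omega⟩) (a ⟨2 * p + 2, by omega⟩)) := by
  have hbound : ∀ j, a ⟨0, by omega⟩ ≤ a j ∧ a j ≤ a ⟨2 * p + 2, by omega⟩ :=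
    fun j => ⟨ha.monotone (Fin.mk_le_of_le_val (Nat.zero_le _)),
      ha.monotone (Fin.le_def.mpr (Nat.lt_succ_iff.mp j.isLt))⟩
  have hpacket : ∀ B : Fin (2 * p + 3) → ℝ, B ≠ 0 →
      (tsupport (fun x => ∑ j, B j * maternKernel p c x (a j)) =
          Set.Icc (a ⟨0, by omega⟩) (a ⟨2 * p + 2, by omega⟩) ↔
        ∀ l ≤ p, ∀ δ : ℝ, (δ = 1 ∨ δ = -1) →
          ∑ j, B j * a j ^ l * Real.exp (δ * c * a j) = 0) :=
    fun B hB => (tsupport_sum_maternKernel_eq_Icc_iff hc.ne' ha.injective (by simp) hB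
      (by simp [Fin.ext_iff]) hbound).trans forall_sign_sum_eq_zero_iff_expMomentsVanish.symm
  have hne : ∀ f : ℝ → ℝ,
      tsupport f = Set.Icc (a ⟨0, by omega⟩) (a ⟨2 * p + 2, by omega⟩) → f ≠ 0 := by
    rintro f hf rfl
    rw [tsupport_zero, eq_comm, Set.Icc_eq_empty_iff] at hf
    exact hf (hbound ⟨0, by omega⟩).2
  obtain rfl : φ = fun x => ∑ j, A j * maternKernel p c x (a j) := funext hφ
  obtain ⟨B, hB, hBpos, hBneg⟩ := exists_ne_zero_expMomentsVanish (p := p) (by simp) c a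
  have hBsys := forall_sign_sum_eq_zero_iff_expMomentsVanish.mpr ⟨hBpos, hBneg⟩
  exact ⟨⟨fun h => (hpacket A hA0).mp h.2,
      fun h => ⟨hne _ ((hpacket A hA0).mpr h), (hpacket A hA0).mpr h⟩⟩,
    B, hB, hBsys, hne _ ((hpacket B hB).mpr hBsys), (hpacket B hB).mpr hBsys⟩
end

section
/- Let k ≥ 3 be an odd integer, let c > 0, let s be an integer with (k+1)/2 ≤ s ≤ k−1, let a_1 < ⋯ < a_s be distinct real numbers, and let t ∈ ℝ. If (A_1, …, A_s) ∈ ℝ^s solves the right-sided kernel packet system on the points a_1, …, a_s, then it also solves the right-sided kernel packet system on the shifted points a_1 + t, …, a_s + t. In other words, the solution space of the system, as a function of the points, is invariant under shifts. -/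
/-- The right-sided kernel packet system on points `a_1 < ⋯ < a_s`, with parameters
`k` (odd, `≥ 3`) and `c > 0`: the `(k-1)/2` equations
`∑_j A_j a_j^l exp(-c a_j) = 0` for `l = 0, …, (k-3)/2`, together with (only when
`s ≥ (k+3)/2`) the auxiliary equations `∑_j A_j a_j^r exp(c a_j) = 0` for
`r = 0, …, s - (k+3)/2`; in total `s - 1` equations. -/
def RightSidedKPSystem (k : ℕ) (c : ℝ) {s : ℕ} (a : Fin s → ℝ) (A : Fin s → ℝ) : Prop :=
  (∀ l ≤ (k - 3) / 2, ∑ j, A j * a j ^ l * Real.exp (-(c * a j)) = 0) ∧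
  (∀ r : ℕ, r + (k + 3) / 2 ≤ s → ∑ j, A j * a j ^ r * Real.exp (c * a j) = 0)

lemma shift_sum_aux {s : ℕ} (a A f : Fin s → ℝ) (t : ℝ) (l : ℕ)
    (h : ∀ m ≤ l, ∑ j, A j * a j ^ m * f j = 0) :
    ∑ j, A j * (a j + t) ^ l * f j = 0 := by
  have : ∀ j : Fin s, A j * (a j + t) ^ l * f j =
      ∑ m ∈ Finset.range (l + 1),
        (t ^ (l - m) * (l.choose m : ℝ)) * (A j * a j ^ m * f j) := by
    intro j
    rw [add_pow, Finset.mul_sum, Finset.sum_mul]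
    congr 1; ext m; ring
  simp_rw [this]
  rw [Finset.sum_comm]
  apply Finset.sum_eq_zero
  intro m hm
  rw [← Finset.mul_sum, h m (Nat.lt_succ_iff.mp (Finset.mem_range.mp hm)), mul_zero]

/-- For odd `k ≥ 3`, `c > 0`, `(k+1)/2 ≤ s ≤ k-1`, points
`a_1 < ⋯ < a_s`, and any shift `t`, every solution of the right-sided kernel packet
system on `a_1, …, a_s` also solves the system on the shifted points `a_1 + t, …, a_s + t`;
i.e., the solution space is shift-invariant. -/
theorem right_sided_kp_system_shift_invariant
    (k : ℕ) (hk3 : 3 ≤ k) (hkodd : Odd k) (c : ℝ) (hc : 0 < c)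
    (s : ℕ) (hs1 : (k + 1) / 2 ≤ s) (hs2 : s ≤ k - 1)
    (a : Fin s → ℝ) (ha : StrictMono a) (t : ℝ)
    (A : Fin s → ℝ) (hA : RightSidedKPSystem k c a A) :
    RightSidedKPSystem k c (fun j => a j + t) A := by
  obtain ⟨h1, h2⟩ := hA
  constructor
  · intro l hl
    have key : ∑ j, A j * (a j + t) ^ l * Real.exp (-(c * a j)) = 0 :=
      shift_sum_aux a A _ t l (fun m hm => h1 m (hm.trans hl))
    have : ∀ j : Fin s, A j * (a j + t) ^ l * Real.exp (-(c * (a j + t))) =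
        Real.exp (-(c * t)) * (A j * (a j + t) ^ l * Real.exp (-(c * a j))) := by
      intro j
      rw [show -(c * (a j + t)) = -(c * a j) + -(c * t) by ring, Real.exp_add]
      ring
    simp_rw [this, ← Finset.mul_sum, key, mul_zero]
  · intro r hr
    have key : ∑ j, A j * (a j + t) ^ r * Real.exp (c * a j) = 0 :=
      shift_sum_aux a A _ t r (fun m hm => h2 m (le_trans (by omega) hr))
    have : ∀ j : Fin s, A j * (a j + t) ^ r * Real.exp (c * (a j + t)) =
        Real.exp (c * t) * (A j * (a j + t) ^ r * Real.exp (c * a j)) := by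
      intro j
      rw [show c * (a j + t) = c * a j + c * t by ring, Real.exp_add]
      ring
    simp_rw [this, ← Finset.mul_sum, key, mul_zero]
end
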